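/- Let (Γ, μ) be a measure space and let K : Γ → ℝ be a measurable function such that for every real h > 0 the integral of exp(-K/h) with respect to μ equals 1. Then μ({x ∈ Γ : K(x) < 0}) = 0, i.e. K ≥ 0 almost everywhere. -/

import Mathlib

open MeasureTheory Real Filter Topology ENNReal

/-! By Fatou's lemma, `∫ liminf_{ℏ → 0⁺} exp(-K/ℏ) dμ ≤ liminf_{ℏ → 0⁺} ∫ exp(-K/ℏ) dμ = 1`.
On `{K < 0}` the integrand `exp(-K/ℏ)` tends to `∞` as `ℏ → 0⁺`, so a function with finite
integral equals `∞` there, which forces `μ {K < 0} = 0`. -/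

section TendstoTop

variable {α : Type*} [MeasurableSpace α] {μ : Measure α} {C : ℝ≥0∞}

theorem measure_setOf_tendsto_atTop_top_eq_zero {f : ℕ → α → ℝ≥0∞}
    (hf : ∀ n, Measurable (f n)) (hC : C ≠ ∞) (hbound : ∀ᶠ n in atTop, ∫⁻ x, f n x ∂μ ≤ C) :
    μ {x | Tendsto (fun n => f n x) atTop (𝓝 ∞)} = 0 := by
  have hliminf_ne_top : ∫⁻ x, liminf (fun n => f n x) atTop ∂μ ≠ ∞ :=
    ((lintegral_liminf_le hf).trans (liminf_le_of_frequently_le' hbound.frequently)).trans_lt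
      hC.lt_top |>.ne
  have hfinite : ∀ᵐ x ∂μ, liminf (fun n => f n x) atTop < ∞ :=
    ae_lt_top (Measurable.liminf hf) hliminf_ne_top
  exact measure_mono_null (fun x hx => not_lt.mpr (top_le_iff.mpr hx.liminf_eq))
    (ae_iff.mp hfinite)

theorem measure_setOf_tendsto_top_eq_zero {ι : Type*} {l : Filter ι} [l.IsCountablyGenerated]
    [l.NeBot] {f : ι → α → ℝ≥0∞} (hf : ∀ i, Measurable (f i)) (hC : C ≠ ∞)
    (hbound : ∀ᶠ i in l, ∫⁻ x, f i x ∂μ ≤ C) :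
    μ {x | Tendsto (fun i => f i x) l (𝓝 ∞)} = 0 := by
  obtain ⟨u, hu⟩ := exists_seq_tendsto l
  exact measure_mono_null (fun x hx => hx.comp hu)
    (measure_setOf_tendsto_atTop_top_eq_zero (fun n => hf (u n)) hC (hu.eventually hbound))

end TendstoTop

theorem tendsto_ofReal_exp_neg_div_nhdsGT_zero {a : ℝ} (ha : a < 0) :
    Tendsto (fun h : ℝ => ENNReal.ofReal (exp (-a / h))) (𝓝[>] 0) (𝓝 ∞) := by
  have hlinear : Tendsto (fun h : ℝ => -a / h) (𝓝[>] 0) atTop := by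
    simpa only [div_eq_mul_inv] using tendsto_inv_nhdsGT_zero.const_mul_atTop (neg_pos.mpr ha)
  exact ENNReal.tendsto_ofReal_atTop.comp (tendsto_exp_atTop.comp hlinear)

/-- First assertion of Lemma 2.7: if `∫ exp(-K/h) dμ = 1` for every `h > 0`,
then `K ≥ 0` almost everywhere, i.e. `μ {K < 0} = 0`. -/
theorem generator_nonneg
    {Γ : Type*} [MeasurableSpace Γ] (μ : Measure Γ) (K : Γ → ℝ)
    (hK : Measurable K)
    (hnorm : ∀ h : ℝ, 0 < h →
      ∫⁻ x, ENNReal.ofReal (Real.exp (-(K x) / h)) ∂μ = 1) :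
    μ {x | K x < 0} = 0 := by
  have hbound : ∀ᶠ h in 𝓝[>] (0 : ℝ), ∫⁻ x, ENNReal.ofReal (exp (-(K x) / h)) ∂μ ≤ 1 :=
    eventually_mem_nhdsWithin.mono fun h hh => (hnorm h hh).le
  exact measure_mono_null (fun x hx => tendsto_ofReal_exp_neg_div_nhdsGT_zero hx)
    (measure_setOf_tendsto_top_eq_zero (fun h => by fun_prop) one_ne_top hbound)
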